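/- arXiv:1010.2677 — 2 statements merged into one kernel-verified Lean document; each statement's English description precedes it below -/
import Mathlib

section
/- Fix β > 0, a deterministic coupling configuration J = (J_{xy})_{x<y,\ x,y∈ℕ}, and a configuration J′ = (J′_{xy}) with J′_{xy} = 0 for all but finitely many pairs. Suppose that along a strictly increasing sequence (N_k) the product measures ∏_{i∈ℕ} G_{N_k,β,J}(dσ^i) converge in finite-dimensional distributions (i.e., integrals of bounded continuous functions of finitely many spins of finitely many replicas converge) to a measure M_J on ({−1,+1}^ℕ)^ℕ, and likewise ∏_{i∈ℕ} G_{N_k,β,J+J′}(dσ^i) converge to M_{J+J′}. Then M_{J+J′} = M_J. -/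
open MeasureTheory ProbabilityTheory Filter
open scoped ENNReal

noncomputable section

/-- The spin value `±1` of a Boolean. -/
def spin (b : Bool) : ℝ := if b then 1 else -1

/-- `(1/√N) Σ_{0 ≤ x < y < N} J_{xy} σ_x σ_y`, i.e. minus the SK Hamiltonian `H_{N,J}`. -/
def skEnergy (N : ℕ) (J : ℕ × ℕ → ℝ) (σ : ℕ → Bool) : ℝ :=
  (Real.sqrt N)⁻¹ *
    ∑ p ∈ (Finset.range N ×ˢ Finset.range N).filter (fun p => p.1 < p.2),
      J p * spin (σ p.1) * spin (σ p.2)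

/-- Extend a configuration on `{0,…,N−1}` to `ℕ` by `+1`. -/
def extendN {N : ℕ} (σ : Fin N → Bool) : ℕ → Bool :=
  fun x => if h : x < N then σ ⟨x, h⟩ else true

/-- The SK Gibbs measure `G_{N,β,J}`, regarded as a measure on `{−1,+1}^ℕ`. -/
def skGibbs (N : ℕ) (β : ℝ) (J : ℕ × ℕ → ℝ) : Measure (ℕ → Bool) :=
  (∑ σ : Fin N → Bool, ENNReal.ofReal (Real.exp (β * skEnergy N J (extendN σ))))⁻¹ •
    ∑ σ : Fin N → Bool,
      ENNReal.ofReal (Real.exp (β * skEnergy N J (extendN σ))) • Measure.dirac (extendN σ)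

lemma abs_spin (b : Bool) : |spin b| = 1 := by cases b <;> simp [spin]

lemma energy_diff (N : ℕ) (J J' : ℕ × ℕ → ℝ) (hJ' : {p : ℕ × ℕ | J' p ≠ 0}.Finite)
    (σ : ℕ → Bool) :
    |skEnergy N (J + J') σ - skEnergy N J σ|
      ≤ (Real.sqrt N)⁻¹ * ∑ p ∈ hJ'.toFinset, |J' p| := by
  classical
  set F := (Finset.range N ×ˢ Finset.range N).filter (fun p => p.1 < p.2) with hF
  have hdiff : skEnergy N (J + J') σ - skEnergy N J σ
      = (Real.sqrt N)⁻¹ * ∑ p ∈ F, J' p * spin (σ p.1) * spin (σ p.2) := by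
    simp only [skEnergy, ← mul_sub, ← Finset.sum_sub_distrib, ← hF]
    congr 1
    refine Finset.sum_congr rfl fun p _ => ?_
    simp only [Pi.add_apply]; ring
  rw [hdiff, abs_mul, abs_of_nonneg (by positivity : (0:ℝ) ≤ (Real.sqrt N)⁻¹)]
  refine mul_le_mul_of_nonneg_left ?_ (by positivity)
  calc |∑ p ∈ F, J' p * spin (σ p.1) * spin (σ p.2)|
      ≤ ∑ p ∈ F, |J' p * spin (σ p.1) * spin (σ p.2)| := Finset.abs_sum_le_sum_abs _ _
    _ = ∑ p ∈ F, |J' p| := by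
        refine Finset.sum_congr rfl fun p _ => ?_
        rw [abs_mul, abs_mul, abs_spin, abs_spin]; ring
    _ = ∑ p ∈ F.filter (fun p => J' p ≠ 0), |J' p| := by
        refine (Finset.sum_filter_of_ne fun p _ h => ?_).symm
        intro h0; exact h (by rw [h0, abs_zero])
    _ ≤ ∑ p ∈ hJ'.toFinset, |J' p| := by
        refine Finset.sum_le_sum_of_subset_of_nonneg ?_ (fun p _ _ => abs_nonneg _)
        intro p hp
        rw [Finset.mem_filter] at hp
        exact hJ'.mem_toFinset.mpr hp.2

lemma pi_sum_dirac {X : Type*} [MeasurableSpace X] (m : ℕ) {ι : Type*} [Fintype ι]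
    (p : ι → ℝ) (hp : ∀ σ, 0 ≤ p σ) (e : ι → X) :
    Measure.pi (fun _ : Fin m => ∑ σ : ι, ENNReal.ofReal (p σ) • Measure.dirac (e σ))
      = ∑ τ : Fin m → ι,
          ENNReal.ofReal (∏ i, p (τ i)) • Measure.dirac (fun i => e (τ i)) := by
  classical
  have hfin : IsFiniteMeasure (∑ σ : ι, ENNReal.ofReal (p σ) • Measure.dirac (e σ)) := by
    constructor
    rw [Measure.finset_sum_apply]
    refine (ENNReal.sum_lt_top.mpr fun σ _ => ?_)
    simp [Measure.smul_apply]
  haveI := hfin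
  refine Measure.pi_eq fun s hs => ?_
  rw [Measure.finset_sum_apply]
  have hbox : MeasurableSet (Set.pi Set.univ s) := MeasurableSet.univ_pi hs
  calc ∑ τ : Fin m → ι,
        (ENNReal.ofReal (∏ i, p (τ i)) • Measure.dirac (fun i => e (τ i))) (Set.pi Set.univ s)
      = ∑ τ : Fin m → ι, ∏ i, (ENNReal.ofReal (p (τ i)) * Measure.dirac (e (τ i)) (s i)) := by
        refine Finset.sum_congr rfl fun τ _ => ?_
        rw [Measure.smul_apply, smul_eq_mul, Measure.dirac_apply' _ hbox]
        by_cases h : ∀ i, e (τ i) ∈ s i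
        · have hmem : (fun i => e (τ i)) ∈ Set.pi Set.univ s := fun i _ => h i
          rw [Set.indicator_of_mem hmem, Pi.one_apply, mul_one,
            ENNReal.ofReal_prod_of_nonneg fun i _ => hp _]
          refine Finset.prod_congr rfl fun i _ => ?_
          rw [Measure.dirac_apply' _ (hs i), Set.indicator_of_mem (h i), Pi.one_apply, mul_one]
        · push_neg at h
          obtain ⟨i, hi⟩ := h
          have hnmem : (fun i => e (τ i)) ∉ Set.pi Set.univ s := fun hmem => hi (hmem i trivial)
          rw [Set.indicator_of_notMem hnmem, mul_zero]
          refine (Finset.prod_eq_zero (Finset.mem_univ i) ?_).symm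
          rw [Measure.dirac_apply' _ (hs i), Set.indicator_of_notMem hi, mul_zero]
    _ = ∏ i : Fin m, ∑ σ : ι, ENNReal.ofReal (p σ) * Measure.dirac (e σ) (s i) := by
        have hps := Finset.prod_univ_sum (fun _ : Fin m => (Finset.univ : Finset ι))
          (fun i σ => ENNReal.ofReal (p σ) * Measure.dirac (e σ) (s i))
        rw [Fintype.piFinset_univ] at hps
        exact hps.symm
    _ = ∏ i : Fin m, (∑ σ : ι, ENNReal.ofReal (p σ) • Measure.dirac (e σ)) (s i) := by
        refine Finset.prod_congr rfl fun i _ => ?_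
        rw [Measure.finset_sum_apply]
        rfl

lemma integral_sum_dirac {X : Type*} [MeasurableSpace X] [MeasurableSingletonClass X]
    {ι : Type*} [Fintype ι] (c : ι → ℝ) (hc : ∀ τ, 0 ≤ c τ) (e : ι → X) (g : X → ℝ) :
    ∫ x, g x ∂(∑ τ : ι, ENNReal.ofReal (c τ) • Measure.dirac (e τ))
      = ∑ τ : ι, c τ * g (e τ) := by
  rw [integral_finset_sum_measure ?_]
  · refine Finset.sum_congr rfl fun τ _ => ?_
    rw [integral_smul_measure, integral_dirac, ENNReal.toReal_ofReal (hc τ), smul_eq_mul]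
  · intro τ _
    refine Integrable.smul_measure ?_ ENNReal.ofReal_ne_top
    exact (integrable_const (g (e τ))).congr (ae_eq_dirac g).symm

lemma skGibbs_eq_sum (N : ℕ) (β : ℝ) (J : ℕ × ℕ → ℝ) :
    skGibbs N β J = ∑ σ : Fin N → Bool,
      ENNReal.ofReal (Real.exp (β * skEnergy N J (extendN σ))
          / ∑ τ : Fin N → Bool, Real.exp (β * skEnergy N J (extendN τ))) •
        Measure.dirac (extendN σ) := by
  have hZ : (0:ℝ) < ∑ τ : Fin N → Bool, Real.exp (β * skEnergy N J (extendN τ)) :=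
    Finset.sum_pos (fun τ _ => Real.exp_pos _) Finset.univ_nonempty
  have hof : (∑ σ : Fin N → Bool, ENNReal.ofReal (Real.exp (β * skEnergy N J (extendN σ))))
      = ENNReal.ofReal (∑ τ : Fin N → Bool, Real.exp (β * skEnergy N J (extendN τ))) := by
    rw [ENNReal.ofReal_sum_of_nonneg fun τ _ => (Real.exp_pos _).le]
  rw [skGibbs, hof, Finset.smul_sum]
  refine Finset.sum_congr rfl fun σ _ => ?_
  rw [smul_smul, ENNReal.ofReal_div_of_pos hZ, div_eq_mul_inv, mul_comm]

set_option maxHeartbeats 1000000 in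
lemma sk_core (β : ℝ) (hβ : 0 < β) (J J' : ℕ × ℕ → ℝ)
    (hJ' : {p : ℕ × ℕ | J' p ≠ 0}.Finite) (m N : ℕ)
    (g : (Fin m → ℕ → Bool) → ℝ) (B : ℝ) (hB : ∀ x, |g x| ≤ B) :
    |(∫ σ, g σ ∂(Measure.pi fun _ : Fin m => skGibbs N β (J + J')))
        - ∫ σ, g σ ∂(Measure.pi fun _ : Fin m => skGibbs N β J)|
      ≤ B * (Real.exp (2 * (β * ((Real.sqrt N)⁻¹ * ∑ p ∈ hJ'.toFinset, |J' p|))) ^ m - 1) := by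
  classical
  set C : ℝ := ∑ p ∈ hJ'.toFinset, |J' p| with hC
  have hC0 : 0 ≤ C := Finset.sum_nonneg fun p _ => abs_nonneg _
  set ε : ℝ := β * ((Real.sqrt N)⁻¹ * C) with hεdef
  have hε : 0 ≤ ε := by positivity
  set w : (Fin N → Bool) → ℝ := fun σ => Real.exp (β * skEnergy N J (extendN σ)) with hw
  set w' : (Fin N → Bool) → ℝ := fun σ => Real.exp (β * skEnergy N (J + J') (extendN σ)) with hw'
  set Z : ℝ := ∑ σ : Fin N → Bool, w σ with hZdef
  set Z' : ℝ := ∑ σ : Fin N → Bool, w' σ with hZ'def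
  have hZ : 0 < Z := Finset.sum_pos (fun τ _ => Real.exp_pos _) Finset.univ_nonempty
  have hZ' : 0 < Z' := Finset.sum_pos (fun τ _ => Real.exp_pos _) Finset.univ_nonempty
  have hwpos : ∀ σ, 0 < w σ := fun σ => Real.exp_pos _
  have hw'pos : ∀ σ, 0 < w' σ := fun σ => Real.exp_pos _
  have hxy : ∀ σ, w' σ ≤ Real.exp ε * w σ := by
    intro σ
    have hd := abs_le.mp (energy_diff N J J' hJ' (extendN σ))
    have : β * skEnergy N (J + J') (extendN σ) ≤ β * skEnergy N J (extendN σ) + ε := by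
      rw [hεdef]; nlinarith [hd.2, hβ.le]
    calc w' σ ≤ Real.exp (β * skEnergy N J (extendN σ) + ε) := Real.exp_le_exp.mpr this
      _ = Real.exp ε * w σ := by rw [Real.exp_add, mul_comm]
  have hyx : ∀ σ, w σ ≤ Real.exp ε * w' σ := by
    intro σ
    have hd := abs_le.mp (energy_diff N J J' hJ' (extendN σ))
    have : β * skEnergy N J (extendN σ) ≤ β * skEnergy N (J + J') (extendN σ) + ε := by
      rw [hεdef]; nlinarith [hd.1, hβ.le]
    calc w σ ≤ Real.exp (β * skEnergy N (J + J') (extendN σ) + ε) := Real.exp_le_exp.mpr this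
      _ = Real.exp ε * w' σ := by rw [Real.exp_add, mul_comm]
  have hZle : Z ≤ Real.exp ε * Z' := by
    rw [hZdef, hZ'def, Finset.mul_sum]
    exact Finset.sum_le_sum fun σ _ => hyx σ
  have hZ'le : Z' ≤ Real.exp ε * Z := by
    rw [hZdef, hZ'def, Finset.mul_sum]
    exact Finset.sum_le_sum fun σ _ => hxy σ
  have hexp2 : Real.exp (2 * ε) = Real.exp ε * Real.exp ε := by
    rw [← Real.exp_add]; ring_nf
  have hratio : ∀ σ, w' σ / Z' ≤ Real.exp (2 * ε) * (w σ / Z) := by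
    intro σ
    rw [← mul_div_assoc, div_le_div_iff₀ hZ' hZ, hexp2]
    have h1 := mul_le_mul (hxy σ) hZle hZ.le (by positivity)
    nlinarith [h1]
  have hratio' : ∀ σ, w σ / Z ≤ Real.exp (2 * ε) * (w' σ / Z') := by
    intro σ
    rw [← mul_div_assoc, div_le_div_iff₀ hZ hZ', hexp2]
    have h1 := mul_le_mul (hyx σ) hZ'le hZ'.le (by positivity)
    nlinarith [h1]
  set c : ℝ := Real.exp (2 * ε) ^ m with hcdef
  have hc1 : 1 ≤ c := one_le_pow₀ (Real.one_le_exp (by positivity))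
  set W : (Fin m → Fin N → Bool) → ℝ := fun τ => ∏ i, w (τ i) / Z with hW
  set W' : (Fin m → Fin N → Bool) → ℝ := fun τ => ∏ i, w' (τ i) / Z' with hW'
  have hWnn : ∀ τ, 0 ≤ W τ := fun τ => Finset.prod_nonneg fun i _ => div_nonneg (hwpos _).le hZ.le
  have hW'nn : ∀ τ, 0 ≤ W' τ := fun τ => Finset.prod_nonneg fun i _ => div_nonneg (hw'pos _).le hZ'.le
  have hWW' : ∀ τ, W' τ ≤ c * W τ := by
    intro τ
    calc W' τ ≤ ∏ i, Real.exp (2 * ε) * (w (τ i) / Z) :=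
          Finset.prod_le_prod (fun i _ => by positivity) (fun i _ => hratio _)
      _ = c * W τ := by
          rw [Finset.prod_mul_distrib, Finset.prod_const, Finset.card_univ, Fintype.card_fin]
  have hW'W : ∀ τ, W τ ≤ c * W' τ := by
    intro τ
    calc W τ ≤ ∏ i, Real.exp (2 * ε) * (w' (τ i) / Z') :=
          Finset.prod_le_prod (fun i _ => by positivity) (fun i _ => hratio' _)
      _ = c * W' τ := by
          rw [Finset.prod_mul_distrib, Finset.prod_const, Finset.card_univ, Fintype.card_fin]
  have habs : ∀ τ, |W' τ - W τ| ≤ (c - 1) * W τ := by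
    intro τ
    rw [abs_sub_le_iff]
    constructor
    · nlinarith [hWW' τ, hWnn τ]
    · nlinarith [hW'W τ, hWnn τ, hW'nn τ, mul_nonneg (mul_self_nonneg (c - 1)) (hWnn τ)]
  have hsum : ∑ τ : Fin m → Fin N → Bool, W τ = 1 := by
    have hps := Finset.prod_univ_sum (fun _ : Fin m => (Finset.univ : Finset (Fin N → Bool)))
      (fun _ σ => w σ / Z)
    rw [Fintype.piFinset_univ] at hps
    calc ∑ τ : Fin m → Fin N → Bool, W τ = ∏ _i : Fin m, ∑ σ : Fin N → Bool, w σ / Z := hps.symm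
      _ = 1 := by rw [← Finset.sum_div, ← hZdef, div_self hZ.ne', Finset.prod_const_one]
  have hI : (∫ σ, g σ ∂(Measure.pi fun _ : Fin m => skGibbs N β J))
      = ∑ τ : Fin m → Fin N → Bool, W τ * g (fun i => extendN (τ i)) := by
    have h1 : (fun _ : Fin m => skGibbs N β J)
        = fun _ => ∑ σ : Fin N → Bool, ENNReal.ofReal (w σ / Z) • Measure.dirac (extendN σ) :=
      funext fun _ => skGibbs_eq_sum N β J
    rw [h1, pi_sum_dirac m (fun σ => w σ / Z) (fun σ => div_nonneg (hwpos σ).le hZ.le) extendN,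
      integral_sum_dirac _ hWnn _ g]
  have hI' : (∫ σ, g σ ∂(Measure.pi fun _ : Fin m => skGibbs N β (J + J')))
      = ∑ τ : Fin m → Fin N → Bool, W' τ * g (fun i => extendN (τ i)) := by
    have h1 : (fun _ : Fin m => skGibbs N β (J + J'))
        = fun _ => ∑ σ : Fin N → Bool, ENNReal.ofReal (w' σ / Z') • Measure.dirac (extendN σ) :=
      funext fun _ => skGibbs_eq_sum N β (J + J')
    rw [h1, pi_sum_dirac m (fun σ => w' σ / Z') (fun σ => div_nonneg (hw'pos σ).le hZ'.le) extendN,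
      integral_sum_dirac _ hW'nn _ g]
  have hB0 : 0 ≤ B := le_trans (abs_nonneg _) (hB (fun _ _ => true))
  rw [hI', hI, ← Finset.sum_sub_distrib]
  have hgoal : |∑ τ : Fin m → Fin N → Bool,
      (W' τ * g (fun i => extendN (τ i)) - W τ * g (fun i => extendN (τ i)))|
      ≤ B * (c - 1) := by
    calc |∑ τ : Fin m → Fin N → Bool,
        (W' τ * g (fun i => extendN (τ i)) - W τ * g (fun i => extendN (τ i)))|
        ≤ ∑ τ : Fin m → Fin N → Bool,
            |(W' τ - W τ) * g (fun i => extendN (τ i))| := by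
          refine le_trans (Finset.abs_sum_le_sum_abs _ _) (le_of_eq ?_)
          refine Finset.sum_congr rfl fun τ _ => ?_
          rw [sub_mul]
      _ ≤ ∑ τ : Fin m → Fin N → Bool, (c - 1) * W τ * B := by
          refine Finset.sum_le_sum fun τ _ => ?_
          rw [abs_mul]
          exact mul_le_mul (habs τ) (hB _) (abs_nonneg _)
            (by nlinarith [hWnn τ])
      _ = B * (c - 1) := by
          rw [← Finset.sum_mul, ← Finset.mul_sum, hsum]
          ring
  exact hgoal

set_option maxHeartbeats 1000000 in
/-- the SK metastate is insensitive to a local change of the couplings.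
Fix deterministic couplings `J` and a perturbation `J′` supported on finitely many pairs.
If along `(N_k)` the i.i.d. replica measures of `G_{N_k,β,J}` converge in
finite-dimensional distributions to `M_J`, and those of `G_{N_k,β,J+J′}` to `M_{J+J′}`,
then `M_{J+J′} = M_J`. -/
theorem sk_local_change_invariance (β : ℝ) (hβ : 0 < β)
    (J J' : ℕ × ℕ → ℝ) (hJ' : {p : ℕ × ℕ | J' p ≠ 0}.Finite)
    (N : ℕ → ℕ) (hN : StrictMono N)
    (MJ MJJ' : Measure (ℕ → (ℕ → Bool)))
    [IsProbabilityMeasure MJ] [IsProbabilityMeasure MJJ']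
    (h1 : ∀ (m : ℕ) (g : (Fin m → ℕ → Bool) → ℝ), Continuous g →
      Tendsto (fun k => ∫ σ, g σ ∂(Measure.pi fun _ : Fin m => skGibbs (N k) β J))
        atTop (nhds (∫ σ, g (fun i => σ i.1) ∂MJ)))
    (h2 : ∀ (m : ℕ) (g : (Fin m → ℕ → Bool) → ℝ), Continuous g →
      Tendsto (fun k => ∫ σ, g σ ∂(Measure.pi fun _ : Fin m => skGibbs (N k) β (J + J')))
        atTop (nhds (∫ σ, g (fun i => σ i.1) ∂MJJ'))) :
    MJJ' = MJ := by
  classical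
  set C : ℝ := ∑ p ∈ hJ'.toFinset, |J' p| with hC
  have hC0 : 0 ≤ C := Finset.sum_nonneg fun p _ => abs_nonneg _
  -- the inverse square roots tend to zero
  have hNt : Tendsto (fun k => ((N k : ℝ))) atTop atTop :=
    tendsto_natCast_atTop_atTop.comp hN.tendsto_atTop
  have hsq : Tendsto (fun k => Real.sqrt (N k)) atTop atTop := by
    have := (tendsto_rpow_atTop (by norm_num : (0:ℝ) < 1/2)).comp hNt
    refine this.congr fun k => ?_
    simp [Function.comp, Real.rpow_natCast, Real.sqrt_eq_rpow]
  have hinv : Tendsto (fun k => (Real.sqrt (N k))⁻¹) atTop (nhds 0) :=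
    hsq.inv_tendsto_atTop
  -- key: equal integrals of continuous finite-replica functions
  have key : ∀ (m : ℕ) (g : (Fin m → ℕ → Bool) → ℝ), Continuous g →
      (∫ σ, g (fun i => σ i.1) ∂MJJ') = ∫ σ, g (fun i => σ i.1) ∂MJ := by
    intro m g hg
    obtain ⟨B, hBmem⟩ : BddAbove (Set.range fun x => |g x|) :=
      (isCompact_range hg.abs).bddAbove
    have hB : ∀ x, |g x| ≤ B := fun x => hBmem (Set.mem_range_self x)
    have hbound : ∀ k,
        |(∫ σ, g σ ∂(Measure.pi fun _ : Fin m => skGibbs (N k) β (J + J')))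
            - ∫ σ, g σ ∂(Measure.pi fun _ : Fin m => skGibbs (N k) β J)|
          ≤ B * (Real.exp (2 * (β * ((Real.sqrt (N k))⁻¹ * C))) ^ m - 1) :=
      fun k => sk_core β hβ J J' hJ' m (N k) g B hB
    have hczero : Tendsto
        (fun k => B * (Real.exp (2 * (β * ((Real.sqrt (N k))⁻¹ * C))) ^ m - 1))
        atTop (nhds 0) := by
      have hcont : Continuous (fun t : ℝ => B * (Real.exp (2 * (β * (t * C))) ^ m - 1)) := by
        continuity
      have h0 : B * (Real.exp (2 * (β * ((0:ℝ) * C))) ^ m - 1) = 0 := by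
        simp
      exact (hcont.tendsto' 0 0 h0).comp hinv
    have habs : Tendsto (fun k =>
        |(∫ σ, g σ ∂(Measure.pi fun _ : Fin m => skGibbs (N k) β (J + J')))
          - ∫ σ, g σ ∂(Measure.pi fun _ : Fin m => skGibbs (N k) β J)|)
        atTop (nhds 0) :=
      squeeze_zero (fun k => abs_nonneg _) hbound hczero
    have hzero : Tendsto (fun k =>
        (∫ σ, g σ ∂(Measure.pi fun _ : Fin m => skGibbs (N k) β (J + J')))
          - ∫ σ, g σ ∂(Measure.pi fun _ : Fin m => skGibbs (N k) β J))
        atTop (nhds 0) := by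
      rw [tendsto_zero_iff_abs_tendsto_zero]
      exact habs
    have hlim := (h2 m g hg).sub (h1 m g hg)
    have := tendsto_nhds_unique hlim hzero
    linarith [this]
  -- conclude via uniqueness of projective limits
  have hrmeas : ∀ I : Finset ℕ,
      Measurable (I.restrict : (ℕ → ℕ → Bool) → ((i : I) → ℕ → Bool)) :=
    fun I => measurable_pi_lambda _ fun i => measurable_pi_apply _
  have hP : ∀ I : Finset ℕ, MJJ'.map I.restrict = MJ.map I.restrict := by
    intro I
    haveI : IsProbabilityMeasure (MJJ'.map I.restrict) :=
      Measure.isProbabilityMeasure_map (hrmeas I).aemeasurable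
    set m : ℕ := (I.sup id) + 1 with hm
    have him : ∀ i : I, (i : ℕ) < m := fun i =>
      Nat.lt_succ_of_le (Finset.le_sup (f := id) i.2)
    refine ext_of_forall_lintegral_eq_of_IsFiniteMeasure fun f => ?_
    have hfm : Measurable fun ω : (i : I) → ℕ → Bool => (f ω : ℝ≥0∞) :=
      measurable_coe_nnreal_ennreal.comp f.continuous.measurable
    rw [lintegral_map hfm (hrmeas I), lintegral_map hfm (hrmeas I)]
    have hrc : Continuous (I.restrict : (ℕ → ℕ → Bool) → ((i : I) → ℕ → Bool)) :=
      continuous_pi fun i => continuous_apply _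
    set g : (Fin m → ℕ → Bool) → ℝ :=
      fun h => NNReal.toReal (f (fun i : I => h ⟨(i : ℕ), him i⟩)) with hgdef
    have hgc : Continuous g := by
      rw [hgdef]
      exact NNReal.continuous_coe.comp (f.continuous.comp (continuous_pi fun i =>
        continuous_apply _))
    have hcont2 : Continuous (fun σ : ℕ → ℕ → Bool => NNReal.toReal (f (I.restrict σ))) :=
      NNReal.continuous_coe.comp (f.continuous.comp hrc)
    obtain ⟨D, hDmem⟩ : BddAbove (Set.range fun σ : ℕ → ℕ → Bool =>
        |NNReal.toReal (f (I.restrict σ))|) := (isCompact_range hcont2.abs).bddAbove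
    have hint : ∀ (μ : Measure (ℕ → ℕ → Bool)) [IsProbabilityMeasure μ],
        Integrable (fun σ : ℕ → ℕ → Bool => NNReal.toReal (f (I.restrict σ))) μ := by
      intro μ hμ
      refine (integrable_const D).mono' hcont2.aestronglyMeasurable ?_
      exact Filter.Eventually.of_forall fun σ => hDmem (Set.mem_range_self σ)
    have hco : ∀ σ : ℕ → ℕ → Bool, g (fun i : Fin m => σ i.1)
        = NNReal.toReal (f (I.restrict σ)) := fun σ => rfl
    calc ∫⁻ σ, (f (I.restrict σ) : ℝ≥0∞) ∂MJJ'
        = ENNReal.ofReal (∫ σ, NNReal.toReal (f (I.restrict σ)) ∂MJJ') :=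
          lintegral_coe_eq_integral _ (hint MJJ')
      _ = ENNReal.ofReal (∫ σ, g (fun i : Fin m => σ i.1) ∂MJJ') := by
          congr 1
      _ = ENNReal.ofReal (∫ σ, g (fun i : Fin m => σ i.1) ∂MJ) := by rw [key m g hgc]
      _ = ENNReal.ofReal (∫ σ, NNReal.toReal (f (I.restrict σ)) ∂MJ) := by
          congr 1
      _ = ∫⁻ σ, (f (I.restrict σ) : ℝ≥0∞) ∂MJ :=
          (lintegral_coe_eq_integral _ (hint MJ)).symm
  haveI : ∀ I : Finset ℕ, IsFiniteMeasure (MJ.map I.restrict) := fun I =>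
    by
    haveI : IsProbabilityMeasure (MJ.map I.restrict) :=
      Measure.isProbabilityMeasure_map (hrmeas I).aemeasurable
    infer_instance
  have hlim1 : IsProjectiveLimit MJ (fun I : Finset ℕ => MJ.map I.restrict) := fun I => rfl
  have hlim2 : IsProjectiveLimit MJJ' (fun I : Finset ℕ => MJ.map I.restrict) := fun I => hP I
  exact hlim2.unique hlim1
end
end

section
/- Let Λ ⊂ Z^d be finite and W ⊂ Λ; write H_W(σ) = Σ_{{x,y}∈W*} J_{xy} σ_x σ_y, H_{Λ∖W}(σ) = Σ_{{x,y}∈(Λ∖W)*} J_{xy} σ_x σ_y, and V_{∂W}(σ) = Σ_{{x,y}∈∂W} J_{xy} σ_x σ_y, where ∂W is the set of edges of Λ* with exactly one endpoint in W. Let ν be the product of standard Gaussians over Λ*. For β_W ≥ 0 and β ≥ 0 define f_{Λ,W}(β_W) = (1/|W|) ∫ν(dJ) log[ ( Σ_{σ∈{−1,+1}^Λ} e^{β_W H_W(σ) + β H_{Λ∖W}(σ) + β V_{∂W}(σ)} ) / ( Σ_{τ∈{−1,+1}^{Λ∖W}} e^{β H_{Λ∖W}(τ)} ) ] and f_W(β_W)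 = (1/|W|) ∫ν(dJ) log Σ_{σ∈{−1,+1}^W} e^{β_W H_W(σ)}. Then 0 ≤ f_{Λ,W}(β_W) − f_W(β_W) ≤ (β²/2) · |∂W|/|W|. -/
open MeasureTheory ProbabilityTheory Filter
open scoped ENNReal

noncomputable section

/-- Sites of `ℤ^d`. -/
abbrev Site (d : ℕ) := Fin d → ℤ
/-- Spin configurations on `ℤ^d`: `S = {−1,+1}^{ℤ^d}`, with `Bool` coding spins. -/
abbrev Config (d : ℕ) := Site d → Bool
/-- Nearest-neighbour edges of `ℤ^d`, parametrized by (site, direction). -/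
abbrev Edge (d : ℕ) := Site d × Fin d

/-- Second endpoint of an edge. -/
def ep2 {d : ℕ} (e : Edge d) : Site d := fun j => e.1 j + if j = e.2 then 1 else 0

/-- The box `Λ_L = {−L,…,L}^d`. -/
def box (d L : ℕ) : Finset (Site d) := Fintype.piFinset fun _ => Finset.Icc (-(L : ℤ)) (L : ℤ)

/-- `W*`: the edges with both endpoints in `W`. -/
def edgesIn {d : ℕ} (W : Finset (Site d)) : Finset (Edge d) :=
  (W ×ˢ (Finset.univ : Finset (Fin d))).filter fun e => ep2 e ∈ W

/-- `∑_{e ∈ E} J_e σ_x σ_y`, the (negative of the) Hamiltonian restricted to edge set `E`. -/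
def energy {d : ℕ} (E : Finset (Edge d)) (J : Edge d → ℝ) (σ : Config d) : ℝ :=
  ∑ e ∈ E, J e * spin (σ e.1) * spin (σ (ep2 e))

/-- Extend a configuration on `Λ` to `ℤ^d` by `+1` outside `Λ`. -/
def extendConfig {d : ℕ} (Λ : Finset (Site d)) (σ : ↥Λ → Bool) : Config d :=
  fun x => if h : x ∈ Λ then σ ⟨x, h⟩ else true

/-- Finite-volume Gibbs-type measure on `S` for a weight `w`, supported on configurations
equal to `+1` off `Λ`. -/
def finGibbs {d : ℕ} (Λ : Finset (Site d)) (w : Config d → ℝ) : Measure (Config d) :=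
  (∑ σ : ↥Λ → Bool, ENNReal.ofReal (w (extendConfig Λ σ)))⁻¹ •
    ∑ σ : ↥Λ → Bool, ENNReal.ofReal (w (extendConfig Λ σ)) • Measure.dirac (extendConfig Λ σ)

/-- The EA Gibbs measure `G_{Λ,β,J}` (free boundary conditions), regarded as a measure on `S`. -/
def eaGibbs {d : ℕ} (Λ : Finset (Site d)) (β : ℝ) (J : Edge d → ℝ) : Measure (Config d) :=
  finGibbs Λ fun σ => Real.exp (β * energy (edgesIn Λ) J σ)

/-- `ν` is the product over the index set of standard Gaussians: all finite-dimensional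
marginals are standard Gaussian product measures. -/
def stdGaussianProduct {ι : Type} (ν : Measure (ι → ℝ)) : Prop :=
  IsProbabilityMeasure ν ∧
    ∀ A : Finset ι, ν.map (fun J (e : ↥A) => J ↑e) = Measure.pi fun _ : ↥A => gaussianReal 0 1

/-- The limit edge overlap `R^W` in the window `W`. -/
def overlapW {d : ℕ} (W : Finset (Site d)) (σ σ' : Config d) : ℝ :=
  ((edgesIn W).card : ℝ)⁻¹ *
    ∑ e ∈ edgesIn W, spin (σ e.1) * spin (σ (ep2 e)) * spin (σ' e.1) * spin (σ' (ep2 e))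

/-- The limit edge overlap `R = lim_L R^{Λ_L}` (defined via `limUnder`; it equals the limit
whenever the limit exists). -/
def overlap (d : ℕ) (σ σ' : Config d) : ℝ :=
  limUnder atTop fun L => overlapW (box d L) σ σ'

/-- The index set of pairs `1 ≤ i < j ≤ s` of replicas. -/
abbrev Pairs (s : ℕ) := {p : Fin s × Fin s // p.1 < p.2}

/-- The finite product of standard Gaussians. -/
def gaussPi (ι : Type) [Fintype ι] : Measure (ι → ℝ) := Measure.pi fun _ => gaussianReal 0 1

/-- Extend a family of couplings indexed by a finite edge set by `0`. -/
def extendE {d : ℕ} (E : Finset (Edge d)) (J : ↥E → ℝ) : Edge d → ℝ :=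
  fun e => if h : e ∈ E then J ⟨e, h⟩ else 0

/-- Translation `T_a` acting on configurations: `(T_a σ)_x = σ_{x+a}`. -/
def trC {d : ℕ} (a : Site d) (σ : Config d) : Config d := fun x => σ (x + a)

/-- Translation `T_a` acting on couplings: `(T_a J)_{{x,y}} = J_{{x+a,y+a}}`. -/
def trJ {d : ℕ} (a : Site d) (J : Edge d → ℝ) : Edge d → ℝ := fun e => J (e.1 + a, e.2)

/-- `∂W`: the edges of `Λ*` with exactly one endpoint in `W`. -/
def bdryEdges {d : ℕ} (Λ W : Finset (Site d)) : Finset (Edge d) :=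
  (edgesIn Λ).filter fun e => Xor (e.1 ∈ W) (ep2 e ∈ W)

/-!
Splitting `σ ∈ {±1}^Λ` into its restrictions to `W` and `Λ \ W` factors the numerator as
`Z_W(β_W) · Z_{Λ\W}(β) · ⟨exp (β V_{∂W})⟩`, where `⟨·⟩` is the product of the Gibbs measures of
the two pieces. Hence `f_{Λ,W} − f_W = |W|⁻¹ · E log ⟨exp (β V_{∂W})⟩`. The decoupled Gibbs
weights do not see the boundary couplings, which are independent standard Gaussians entering
`V_{∂W}` linearly with coefficients `±1`. Jensen for `⟨·⟩` gives `log ⟨exp (β V)⟩ ≥ β ⟨V⟩`, whose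
expectation vanishes; Jensen for `E` gives `E log ⟨exp (β V)⟩ ≤ log E ⟨exp (β V)⟩`, and the
Gaussian moment generating function evaluates the right side to `β² |∂W| / 2`.
-/

open Real Finset

lemma integral_mul_eq_mul_integral_of_dependsOn {ι : Type*} [Fintype ι]
    {Ω : ι → Type*} [∀ i, MeasurableSpace (Ω i)] (μ : ∀ i, Measure (Ω i))
    [∀ i, IsProbabilityMeasure (μ i)] (S : Finset ι) {f g : (∀ i, Ω i) → ℝ}
    (hf : Measurable f) (hg : Measurable g) (hfS : DependsOn f (↑S)ᶜ) (hgS : DependsOn g ↑S) :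
    ∫ x, f x * g x ∂Measure.pi μ = (∫ x, f x ∂Measure.pi μ) * ∫ x, g x ∂Measure.pi μ := by
  classical
  have x₀ : ∀ i, Ω i := fun i => (nonempty_of_isProbabilityMeasure (μ i)).some
  have hind : IndepFun Sᶜ.restrict S.restrict (Measure.pi μ) :=
    (iIndepFun_pi (X := fun _ => id) fun _ => aemeasurable_id).indepFun_finset Sᶜ S
      disjoint_compl_left fun i => measurable_pi_apply i
  have hf' : f = (fun y => f (Function.updateFinset x₀ Sᶜ y)) ∘ Sᶜ.restrict :=
    funext fun x => hfS fun i hi => by simp [Function.updateFinset, show i ∉ S from hi]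
  have hg' : g = (fun y => g (Function.updateFinset x₀ S y)) ∘ S.restrict :=
    funext fun x => hgS fun i hi => by simp [Function.updateFinset, show i ∈ S from hi]
  rw [hf', hg']
  exact hind.integral_comp_mul_comp (by fun_prop) (by fun_prop)
    (hf.comp measurable_updateFinset).aestronglyMeasurable
    (hg.comp measurable_updateFinset).aestronglyMeasurable

lemma dependsOn_sum_mul {ι : Type*} (S : Finset ι) (c : ι → ℝ) :
    DependsOn (fun x : ι → ℝ => ∑ i ∈ S, c i * x i) ↑S :=
  fun _ _ h => sum_congr rfl fun i hi => by rw [h i hi]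

lemma sum_mul_le_log_sum_mul_exp {P : Type*} [Fintype P] {w : P → ℝ} (hw : ∀ p, 0 ≤ w p)
    (hw1 : ∑ p, w p = 1) (h : P → ℝ) : ∑ p, w p * h p ≤ log (∑ p, w p * exp (h p)) := by
  have jensen : exp (∑ p, w p * h p) ≤ ∑ p, w p * exp (h p) :=
    convexOn_exp.map_sum_le (fun p _ => hw p) hw1 fun _ _ => Set.mem_univ _
  rwa [le_log_iff_exp_le ((exp_pos _).trans_le jensen)]

section LogIntegral

variable {α : Type*} [MeasurableSpace α] {μ : Measure α} {f g : α → ℝ}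

lemma integrable_log_of_le [IsFiniteMeasure μ] (hg : Integrable g μ) (hg0 : ∀ x, 0 < g x)
    (hf : Integrable f μ) (hfg : ∀ x, f x ≤ log (g x)) : Integrable (fun x => log (g x)) μ :=
  integrable_of_le_of_le hg.aemeasurable.log.aestronglyMeasurable (ae_of_all _ hfg)
    (ae_of_all _ fun x => log_le_sub_one_of_pos (hg0 x)) hf (hg.sub (integrable_const 1))

lemma integral_log_le_log_integral [IsProbabilityMeasure μ] (hg : Integrable g μ)
    (hg0 : ∀ x, 0 < g x) (hlog : Integrable (fun x => log (g x)) μ) :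
    ∫ x, log (g x) ∂μ ≤ log (∫ x, g x ∂μ) := by
  set K := ∫ x, g x ∂μ
  have hK : 0 < K := by
    rw [integral_pos_iff_support_of_nonneg (fun x => (hg0 x).le) hg,
      Function.support_eq_univ fun x => (hg0 x).ne']
    simp
  have hint : Integrable (fun x => g x / K - 1) μ := (hg.div_const K).sub (integrable_const 1)
  calc ∫ x, log (g x) ∂μ ≤ ∫ x, (log K + (g x / K - 1)) ∂μ := by
        refine integral_mono hlog ((integrable_const _).add hint) fun x => ?_
        have := log_le_sub_one_of_pos (div_pos (hg0 x) hK)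
        rw [log_div (hg0 x).ne' hK.ne'] at this
        linarith
    _ = log K := by
        rw [integral_add (integrable_const _) hint,
          integral_sub (hg.div_const K) (integrable_const 1), integral_div, div_self hK.ne']
        simp

end LogIntegral

section Gaussian

variable {ι : Type} [Fintype ι]

instance : IsProbabilityMeasure (gaussPi ι) := by unfold gaussPi; infer_instance

lemma exp_sum_mul_eq_prod_ite [DecidableEq ι] (S : Finset ι) (c x : ι → ℝ) :
    exp (∑ i ∈ S, c i * x i) = ∏ i, if i ∈ S then exp (c i * x i) else 1 := by
  rw [exp_sum, prod_ite_mem, univ_inter]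

lemma integrable_exp_sum_mul_gaussPi (S : Finset ι) (c : ι → ℝ) :
    Integrable (fun x => exp (∑ i ∈ S, c i * x i)) (gaussPi ι) := by
  classical
  simp_rw [exp_sum_mul_eq_prod_ite]
  refine Integrable.fintype_prod (f := fun i y => if i ∈ S then exp (c i * y) else 1) fun i => ?_
  split_ifs
  · exact integrable_exp_mul_gaussianReal _
  · exact integrable_const _

lemma integral_exp_sum_mul_gaussPi (S : Finset ι) (c : ι → ℝ) :
    ∫ x, exp (∑ i ∈ S, c i * x i) ∂gaussPi ι = exp (∑ i ∈ S, c i ^ 2 / 2) := by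
  classical
  simp_rw [exp_sum_mul_eq_prod_ite]
  calc ∫ x, ∏ i, (if i ∈ S then exp (c i * x i) else 1) ∂gaussPi ι
      = ∏ i, if i ∈ S then exp (c i ^ 2 / 2) else 1 := by
        rw [gaussPi, integral_fintype_prod_eq_prod (fun i y => if i ∈ S then exp (c i * y) else 1)]
        refine prod_congr rfl fun i _ => ?_
        split_ifs
        · simpa [mgf] using congrFun (mgf_id_gaussianReal (μ := 0) (v := 1)) (c i)
        · simp
    _ = exp (∑ i ∈ S, c i ^ 2 / 2) := by rw [prod_ite_mem, univ_inter, exp_sum]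

lemma integrable_sum_mul_gaussPi (S : Finset ι) (c : ι → ℝ) :
    Integrable (fun x => ∑ i ∈ S, c i * x i) (gaussPi ι) :=
  integrable_finsetSum _ fun _ _ => (integrable_eval IsGaussian.integrable_id).const_mul _

lemma integral_sum_mul_gaussPi (S : Finset ι) (c : ι → ℝ) :
    ∫ x, ∑ i ∈ S, c i * x i ∂gaussPi ι = 0 := by
  rw [integral_finsetSum _ fun _ _ => (integrable_eval IsGaussian.integrable_id).const_mul _]
  refine sum_eq_zero fun _ _ => ?_
  rw [integral_const_mul, gaussPi, integral_eval, integral_id_gaussianReal, mul_zero]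

variable (S : Finset ι) (c : ι → ℝ) {f : (ι → ℝ) → ℝ}

lemma integral_mul_exp_sum_mul_gaussPi (hf : Measurable f) (hfS : DependsOn f (↑S)ᶜ) :
    ∫ x, f x * exp (∑ i ∈ S, c i * x i) ∂gaussPi ι =
      (∫ x, f x ∂gaussPi ι) * exp (∑ i ∈ S, c i ^ 2 / 2) := by
  rw [← integral_exp_sum_mul_gaussPi]
  exact integral_mul_eq_mul_integral_of_dependsOn _ S hf (by fun_prop)
    hfS fun _ _ h => congrArg exp (dependsOn_sum_mul S c h)

lemma integral_mul_sum_mul_gaussPi (hf : Measurable f) (hfS : DependsOn f (↑S)ᶜ) :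
    ∫ x, f x * ∑ i ∈ S, c i * x i ∂gaussPi ι = 0 := by
  rw [gaussPi, integral_mul_eq_mul_integral_of_dependsOn _ S hf (by fun_prop)
    hfS (dependsOn_sum_mul S c), ← gaussPi, integral_sum_mul_gaussPi, mul_zero]

end Gaussian

section Spin

variable {d : ℕ}

def bond (τ : Config d) (e : Edge d) : ℝ := spin (τ e.1) * spin (τ (ep2 e))

lemma bond_sq (τ : Config d) (e : Edge d) : bond τ e ^ 2 = 1 := by
  unfold bond spin; split_ifs <;> norm_num

lemma mem_edgesIn {F : Finset (Site d)} {e : Edge d} :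
    e ∈ edgesIn F ↔ e.1 ∈ F ∧ ep2 e ∈ F := by
  simp [edgesIn]

lemma energy_eq_sum_mul_bond (E : Finset (Edge d)) (J : Edge d → ℝ) (τ : Config d) :
    energy E J τ = ∑ e ∈ E, J e * bond τ e :=
  sum_congr rfl fun _ _ => mul_assoc _ _ _

lemma extendE_coe (E : Finset (Edge d)) (J : ↥E → ℝ) (i : ↥E) : extendE E J i = J i := by
  simp [extendE]

lemma energy_extendE (E F : Finset (Edge d)) (J : ↥F → ℝ) (τ : Config d) :
    energy E (extendE F J) τ = ∑ i ∈ E.subtype (· ∈ F), bond τ i * J i := by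
  classical
  rw [energy_eq_sum_mul_bond, ← sum_filter_of_ne (p := (· ∈ F)) fun e _ he => ?_,
    ← sum_subtype_eq_sum_filter]
  · exact sum_congr rfl fun i _ => by rw [extendE_coe, mul_comm]
  · by_contra hF
    simp [extendE, hF] at he

lemma mul_energy_extendE (E F : Finset (Edge d)) (β : ℝ) (J : ↥F → ℝ) (τ : Config d) :
    β * energy E (extendE F J) τ = ∑ i ∈ E.subtype (· ∈ F), β * bond τ i * J i := by
  rw [energy_extendE, mul_sum]
  simp only [mul_assoc]

lemma energy_congr {E : Finset (Edge d)} {J J' : Edge d → ℝ} (h : ∀ e ∈ E, J e = J' e)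
    (τ : Config d) : energy E J τ = energy E J' τ :=
  sum_congr rfl fun e he => by rw [h e he]

lemma measurable_energy (E : Finset (Edge d)) (τ : Config d) :
    Measurable fun J : Edge d → ℝ => energy E J τ := by
  unfold energy; fun_prop

lemma measurable_extendE (E : Finset (Edge d)) : Measurable (extendE E) := by
  refine measurable_pi_lambda _ fun e => ?_
  unfold extendE
  split_ifs <;> fun_prop

lemma extendConfig_restrict (F : Finset (Site d)) (τ : Config d) {x : Site d} (hx : x ∈ F) :
    extendConfig F (F.restrict τ) x = τ x := by
  simp [extendConfig, hx]

lemma energy_edgesIn_extendConfig_restrict (F : Finset (Site d)) (J : Edge d → ℝ)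
    (τ : Config d) :
    energy (edgesIn F) J (extendConfig F (F.restrict τ)) = energy (edgesIn F) J τ := by
  refine sum_congr rfl fun e he => ?_
  obtain ⟨h1, h2⟩ := mem_edgesIn.mp he
  rw [extendConfig_restrict F τ h1, extendConfig_restrict F τ h2]

def partitionFn (F : Finset (Site d)) (E : Finset (Edge d)) (β : ℝ) (J : Edge d → ℝ) : ℝ :=
  ∑ σ : ↥F → Bool, exp (β * energy E J (extendConfig F σ))

def gibbsWeight (F : Finset (Site d)) (E : Finset (Edge d)) (β : ℝ) (J : Edge d → ℝ)
    (σ : ↥F → Bool) : ℝ :=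
  exp (β * energy E J (extendConfig F σ)) / partitionFn F E β J

variable {F : Finset (Site d)} {E : Finset (Edge d)} {β : ℝ} {J : Edge d → ℝ}

lemma partitionFn_pos : 0 < partitionFn F E β J :=
  sum_pos (fun _ _ => exp_pos _) univ_nonempty

lemma gibbsWeight_pos (σ : ↥F → Bool) : 0 < gibbsWeight F E β J σ :=
  div_pos (exp_pos _) partitionFn_pos

lemma gibbsWeight_le_one (σ : ↥F → Bool) : gibbsWeight F E β J σ ≤ 1 :=
  div_le_one_of_le₀ (single_le_sum (f := fun σ => exp (β * energy E J (extendConfig F σ)))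
    (fun _ _ => (exp_pos _).le) (mem_univ σ)) partitionFn_pos.le

lemma sum_gibbsWeight : ∑ σ, gibbsWeight F E β J σ = 1 := by
  simp only [gibbsWeight]
  rw [← sum_div]
  exact div_self partitionFn_pos.ne'

lemma gibbsWeight_congr {J' : Edge d → ℝ} (h : ∀ e ∈ E, J e = J' e) (σ : ↥F → Bool) :
    gibbsWeight F E β J σ = gibbsWeight F E β J' σ := by
  simp only [gibbsWeight, partitionFn, energy_congr h]

lemma measurable_gibbsWeight (F : Finset (Site d)) (E : Finset (Edge d)) (β : ℝ)
    (σ : ↥F → Bool) : Measurable fun J => gibbsWeight F E β J σ := by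
  unfold gibbsWeight partitionFn
  have := measurable_energy (d := d) E
  fun_prop

end Spin

section Window

variable {d : ℕ} {Λ W : Finset (Site d)}

def splitConfig (hWΛ : W ⊆ Λ) : (↥Λ → Bool) ≃ (↥W → Bool) × (↥(Λ \ W) → Bool) where
  toFun σ := (W.restrict (extendConfig Λ σ), (Λ \ W).restrict (extendConfig Λ σ))
  invFun p := Λ.restrict fun x => if x ∈ W then extendConfig W p.1 x else extendConfig (Λ \ W) p.2 x
  left_inv σ := by
    funext x
    by_cases hx : ↑x ∈ W <;> simp [extendConfig, hx]
  right_inv p := by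
    ext x
    · simp [extendConfig, hWΛ x.2]
    · have hx := mem_sdiff.mp x.2
      simp [extendConfig, hx]

lemma sum_restrict_mul_restrict (hWΛ : W ⊆ Λ) (f : (↥W → Bool) → ℝ) (g : (↥(Λ \ W) → Bool) → ℝ) :
    ∑ σ : ↥Λ → Bool, f (W.restrict (extendConfig Λ σ)) * g ((Λ \ W).restrict (extendConfig Λ σ)) =
      (∑ a, f a) * ∑ b, g b := by
  rw [sum_mul_sum, ← Fintype.sum_prod_type']
  exact Fintype.sum_equiv (splitConfig hWΛ) _ _ fun _ => rfl

variable (Λ W) (βW β : ℝ) (J : Edge d → ℝ)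

def decoupledWeight (σ : ↥Λ → Bool) : ℝ :=
  gibbsWeight W (edgesIn W) βW J (W.restrict (extendConfig Λ σ)) *
    gibbsWeight (Λ \ W) (edgesIn (Λ \ W)) β J ((Λ \ W).restrict (extendConfig Λ σ))

def windowPartitionFn : ℝ :=
  ∑ σ : ↥Λ → Bool, exp (βW * energy (edgesIn W) J (extendConfig Λ σ)
    + β * energy (edgesIn (Λ \ W)) J (extendConfig Λ σ)
    + β * energy (bdryEdges Λ W) J (extendConfig Λ σ))

def boundaryAverage : ℝ :=
  ∑ σ, decoupledWeight Λ W βW β J σ * exp (β * energy (bdryEdges Λ W) J (extendConfig Λ σ))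

variable {Λ W}

lemma decoupledWeight_pos (σ : ↥Λ → Bool) : 0 < decoupledWeight Λ W βW β J σ :=
  mul_pos (gibbsWeight_pos _) (gibbsWeight_pos _)

lemma decoupledWeight_le_one (σ : ↥Λ → Bool) : decoupledWeight Λ W βW β J σ ≤ 1 :=
  mul_le_one₀ (gibbsWeight_le_one _) (gibbsWeight_pos _).le (gibbsWeight_le_one _)

lemma sum_decoupledWeight (hWΛ : W ⊆ Λ) : ∑ σ, decoupledWeight Λ W βW β J σ = 1 := by
  unfold decoupledWeight
  rw [sum_restrict_mul_restrict hWΛ, sum_gibbsWeight, sum_gibbsWeight, one_mul]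

lemma boundaryAverage_pos : 0 < boundaryAverage Λ W βW β J :=
  sum_pos (fun σ _ => mul_pos (decoupledWeight_pos βW β J σ) (exp_pos _)) univ_nonempty

lemma windowPartitionFn_eq_mul_boundaryAverage :
    windowPartitionFn Λ W βW β J =
      partitionFn W (edgesIn W) βW J * partitionFn (Λ \ W) (edgesIn (Λ \ W)) β J *
        boundaryAverage Λ W βW β J := by
  rw [boundaryAverage, mul_sum]
  refine sum_congr rfl fun σ _ => ?_
  rw [decoupledWeight, gibbsWeight, gibbsWeight, energy_edgesIn_extendConfig_restrict,
    energy_edgesIn_extendConfig_restrict, exp_add, exp_add]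
  field_simp [partitionFn_pos.ne']

lemma log_windowPartitionFn_div :
    log (windowPartitionFn Λ W βW β J / partitionFn (Λ \ W) (edgesIn (Λ \ W)) β J) =
      log (partitionFn W (edgesIn W) βW J) + log (boundaryAverage Λ W βW β J) := by
  rw [windowPartitionFn_eq_mul_boundaryAverage, mul_right_comm, mul_div_cancel_right₀ _ partitionFn_pos.ne',
    log_mul partitionFn_pos.ne' (boundaryAverage_pos βW β J).ne']

end Window

section Disorder

variable {d : ℕ}

lemma integrable_partitionFn_extendE (F : Finset (Site d)) (E E' : Finset (Edge d)) (β : ℝ) :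
    Integrable (fun J => partitionFn F E β (extendE E' J)) (gaussPi ↥E') := by
  unfold partitionFn
  simp only [mul_energy_extendE]
  exact integrable_finsetSum _ fun σ _ => integrable_exp_sum_mul_gaussPi _ _

lemma integrable_log_partitionFn_extendE (F : Finset (Site d)) (E E' : Finset (Edge d)) (β : ℝ) :
    Integrable (fun J => log (partitionFn F E β (extendE E' J))) (gaussPi ↥E') := by
  refine integrable_log_of_le (integrable_partitionFn_extendE F E E' β)
    (fun _ => partitionFn_pos) (integrable_sum_mul_gaussPi (E.subtype (· ∈ E'))
      fun i => β * bond (extendConfig F fun _ => true) i) fun J => ?_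
  rw [← mul_energy_extendE, ← log_exp (β * _)]
  exact log_le_log (exp_pos _) (single_le_sum (f := fun σ : ↥F → Bool =>
    exp (β * energy E (extendE E' J) (extendConfig F σ))) (fun _ _ => (exp_pos _).le) (mem_univ _))

def bdryCoords (Λ W : Finset (Site d)) : Finset ↥(edgesIn Λ) :=
  (bdryEdges Λ W).subtype (· ∈ edgesIn Λ)

variable {Λ W : Finset (Site d)} (βW β : ℝ)

lemma card_bdryCoords : (bdryCoords Λ W).card = (bdryEdges Λ W).card := by
  rw [bdryCoords, card_subtype,
    filter_true_of_mem fun e (he : e ∈ bdryEdges Λ W) => filter_subset _ _ he]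

lemma notMem_bdryEdges_of_mem_edgesIn {e : Edge d} (he : e ∈ edgesIn W ∪ edgesIn (Λ \ W)) :
    e ∉ bdryEdges Λ W := by
  intro hB
  have hX := (mem_filter.mp hB).2
  unfold Xor at hX
  rcases mem_union.mp he with he | he <;> obtain ⟨h1, h2⟩ := mem_edgesIn.mp he
  · tauto
  · have := (mem_sdiff.mp h1).2
    have := (mem_sdiff.mp h2).2
    tauto

lemma dependsOn_decoupledWeight (σ : ↥Λ → Bool) :
    DependsOn (fun J => decoupledWeight Λ W βW β (extendE (edgesIn Λ) J) σ)
      (↑(bdryCoords Λ W))ᶜ := by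
  intro J J' h
  have hJ : ∀ e ∈ edgesIn W ∪ edgesIn (Λ \ W),
      extendE (edgesIn Λ) J e = extendE (edgesIn Λ) J' e := fun e he => by
    unfold extendE
    split_ifs
    · exact h _ fun hB => notMem_bdryEdges_of_mem_edgesIn he (by simpa [bdryCoords] using hB)
    · rfl
  simp only [decoupledWeight]
  rw [gibbsWeight_congr fun e he => hJ e (mem_union_left _ he),
    gibbsWeight_congr fun e he => hJ e (mem_union_right _ he)]

lemma measurable_decoupledWeight (σ : ↥Λ → Bool) :
    Measurable fun J => decoupledWeight Λ W βW β (extendE (edgesIn Λ) J) σ :=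
  ((measurable_gibbsWeight _ _ _ _).mul (measurable_gibbsWeight _ _ _ _)).comp
    (measurable_extendE _)

lemma boundaryAverage_extendE (J : ↥(edgesIn Λ) → ℝ) :
    boundaryAverage Λ W βW β (extendE (edgesIn Λ) J) =
      ∑ σ, decoupledWeight Λ W βW β (extendE (edgesIn Λ) J) σ *
        exp (∑ i ∈ bdryCoords Λ W, β * bond (extendConfig Λ σ) i * J i) := by
  simp only [boundaryAverage, mul_energy_extendE, bdryCoords]

lemma norm_decoupledWeight_le_one (J : Edge d → ℝ) (σ : ↥Λ → Bool) :
    ‖decoupledWeight Λ W βW β J σ‖ ≤ 1 := by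
  rw [norm_of_nonneg (decoupledWeight_pos _ _ _ σ).le]
  exact decoupledWeight_le_one _ _ _ σ

lemma integrable_decoupledWeight (σ : ↥Λ → Bool) :
    Integrable (fun J => decoupledWeight Λ W βW β (extendE (edgesIn Λ) J) σ)
      (gaussPi ↥(edgesIn Λ)) :=
  .of_bound (measurable_decoupledWeight βW β σ).aestronglyMeasurable 1
    (ae_of_all _ fun _ => norm_decoupledWeight_le_one βW β _ σ)

lemma integrable_decoupledWeight_mul {g : (↥(edgesIn Λ) → ℝ) → ℝ}
    (hg : Integrable g (gaussPi ↥(edgesIn Λ))) (σ : ↥Λ → Bool) :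
    Integrable (fun J => decoupledWeight Λ W βW β (extendE (edgesIn Λ) J) σ * g J)
      (gaussPi ↥(edgesIn Λ)) :=
  hg.bdd_mul (measurable_decoupledWeight βW β σ).aestronglyMeasurable
    (ae_of_all _ fun _ => norm_decoupledWeight_le_one βW β _ σ)

lemma integrable_boundaryAverage :
    Integrable (fun J => boundaryAverage Λ W βW β (extendE (edgesIn Λ) J))
      (gaussPi ↥(edgesIn Λ)) := by
  simp only [boundaryAverage_extendE]
  exact integrable_finsetSum _ fun σ _ =>
    integrable_decoupledWeight_mul βW β (integrable_exp_sum_mul_gaussPi _ _) σ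

lemma integral_boundaryAverage (hWΛ : W ⊆ Λ) :
    ∫ J, boundaryAverage Λ W βW β (extendE (edgesIn Λ) J) ∂gaussPi ↥(edgesIn Λ) =
      exp (β ^ 2 / 2 * (bdryEdges Λ W).card) := by
  simp only [boundaryAverage_extendE]
  rw [integral_finsetSum _ fun σ _ =>
    integrable_decoupledWeight_mul βW β (integrable_exp_sum_mul_gaussPi _ _) σ]
  simp only [integral_mul_exp_sum_mul_gaussPi _ _ (measurable_decoupledWeight βW β _)
    (dependsOn_decoupledWeight βW β _), mul_pow, bond_sq, mul_one, sum_const, card_bdryCoords]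
  rw [← sum_mul, ← integral_finsetSum _ fun σ _ => integrable_decoupledWeight βW β σ]
  simp [sum_decoupledWeight βW β _ hWΛ, mul_comm]

lemma sum_decoupledWeight_mul_le_log_boundaryAverage (hWΛ : W ⊆ Λ) (J : ↥(edgesIn Λ) → ℝ) :
    ∑ σ, decoupledWeight Λ W βW β (extendE (edgesIn Λ) J) σ *
        ∑ i ∈ bdryCoords Λ W, β * bond (extendConfig Λ σ) i * J i ≤
      log (boundaryAverage Λ W βW β (extendE (edgesIn Λ) J)) := by
  rw [boundaryAverage_extendE]
  exact sum_mul_le_log_sum_mul_exp (fun σ => (decoupledWeight_pos βW β _ σ).le)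
    (sum_decoupledWeight βW β _ hWΛ) _

lemma integrable_log_boundaryAverage (hWΛ : W ⊆ Λ) :
    Integrable (fun J => log (boundaryAverage Λ W βW β (extendE (edgesIn Λ) J)))
      (gaussPi ↥(edgesIn Λ)) :=
  integrable_log_of_le (integrable_boundaryAverage βW β) (fun _ => boundaryAverage_pos βW β _)
    (integrable_finsetSum _ fun σ _ =>
      integrable_decoupledWeight_mul βW β (integrable_sum_mul_gaussPi _ _) σ)
    (sum_decoupledWeight_mul_le_log_boundaryAverage βW β hWΛ)

lemma integral_log_boundaryAverage_nonneg (hWΛ : W ⊆ Λ) :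
    0 ≤ ∫ J, log (boundaryAverage Λ W βW β (extendE (edgesIn Λ) J)) ∂gaussPi ↥(edgesIn Λ) := by
  have hint : ∀ σ : ↥Λ → Bool, Integrable (fun J => decoupledWeight Λ W βW β
      (extendE (edgesIn Λ) J) σ * ∑ i ∈ bdryCoords Λ W, β * bond (extendConfig Λ σ) i * J i)
      (gaussPi ↥(edgesIn Λ)) := fun σ =>
    integrable_decoupledWeight_mul βW β (integrable_sum_mul_gaussPi _ _) σ
  calc (0 : ℝ) = ∫ J, ∑ σ, decoupledWeight Λ W βW β (extendE (edgesIn Λ) J) σ *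
        ∑ i ∈ bdryCoords Λ W, β * bond (extendConfig Λ σ) i * J i ∂gaussPi ↥(edgesIn Λ) := by
        rw [integral_finsetSum _ fun σ _ => hint σ]
        simp only [integral_mul_sum_mul_gaussPi _ _ (measurable_decoupledWeight βW β _)
          (dependsOn_decoupledWeight βW β _), sum_const_zero]
    _ ≤ _ := integral_mono (integrable_finsetSum _ fun σ _ => hint σ)
        (integrable_log_boundaryAverage βW β hWΛ)
        (sum_decoupledWeight_mul_le_log_boundaryAverage βW β hWΛ)

lemma integral_log_boundaryAverage_le (hWΛ : W ⊆ Λ) :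
    ∫ J, log (boundaryAverage Λ W βW β (extendE (edgesIn Λ) J)) ∂gaussPi ↥(edgesIn Λ) ≤
      β ^ 2 / 2 * (bdryEdges Λ W).card := by
  refine (integral_log_le_log_integral (integrable_boundaryAverage βW β)
    (fun _ => boundaryAverage_pos βW β _) (integrable_log_boundaryAverage βW β hWΛ)).trans_eq ?_
  rw [integral_boundaryAverage βW β hWΛ, log_exp]

end Disorder

theorem window_free_energy_comparison_general (d : ℕ) (Λ W : Finset (Site d)) (hWΛ : W ⊆ Λ)
    (βW β : ℝ) :
    0 ≤
      (((W.card : ℝ))⁻¹ * ∫ J, Real.log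
          ((∑ σ : ↥Λ → Bool, Real.exp
              (βW * energy (edgesIn W) (extendE (edgesIn Λ) J) (extendConfig Λ σ)
                + β * energy (edgesIn (Λ \ W)) (extendE (edgesIn Λ) J) (extendConfig Λ σ)
                + β * energy (bdryEdges Λ W) (extendE (edgesIn Λ) J) (extendConfig Λ σ)))
            / ∑ τ : ↥(Λ \ W) → Bool, Real.exp
              (β * energy (edgesIn (Λ \ W)) (extendE (edgesIn Λ) J)
                (extendConfig (Λ \ W) τ)))
          ∂(gaussPi ↥(edgesIn Λ)))
      - ((W.card : ℝ))⁻¹ * ∫ J, Real.log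
          (∑ σ : ↥W → Bool, Real.exp
            (βW * energy (edgesIn W) (extendE (edgesIn Λ) J) (extendConfig W σ)))
          ∂(gaussPi ↥(edgesIn Λ)) ∧
    (((W.card : ℝ))⁻¹ * ∫ J, Real.log
          ((∑ σ : ↥Λ → Bool, Real.exp
              (βW * energy (edgesIn W) (extendE (edgesIn Λ) J) (extendConfig Λ σ)
                + β * energy (edgesIn (Λ \ W)) (extendE (edgesIn Λ) J) (extendConfig Λ σ)
                + β * energy (bdryEdges Λ W) (extendE (edgesIn Λ) J) (extendConfig Λ σ)))
            / ∑ τ : ↥(Λ \ W) → Bool, Real.exp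
              (β * energy (edgesIn (Λ \ W)) (extendE (edgesIn Λ) J)
                (extendConfig (Λ \ W) τ)))
          ∂(gaussPi ↥(edgesIn Λ)))
      - ((W.card : ℝ))⁻¹ * ∫ J, Real.log
          (∑ σ : ↥W → Bool, Real.exp
            (βW * energy (edgesIn W) (extendE (edgesIn Λ) J) (extendConfig W σ)))
          ∂(gaussPi ↥(edgesIn Λ))
      ≤ β ^ 2 / 2 * ((bdryEdges Λ W).card / (W.card : ℝ)) := by
  simp only [← windowPartitionFn.eq_1, ← partitionFn.eq_1, log_windowPartitionFn_div]
  rw [integral_add (integrable_log_partitionFn_extendE _ _ _ _)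
    (integrable_log_boundaryAverage βW β hWΛ), mul_add, add_sub_cancel_left]
  refine ⟨mul_nonneg (by positivity) (integral_log_boundaryAverage_nonneg βW β hWΛ), ?_⟩
  calc _ ≤ (W.card : ℝ)⁻¹ * (β ^ 2 / 2 * (bdryEdges Λ W).card) :=
        mul_le_mul_of_nonneg_left (integral_log_boundaryAverage_le βW β hWΛ) (by positivity)
    _ = _ := by ring

/-- the free energy of the window is insensitive to the environment.
With `f_{Λ,W}(β_W)` the `W`-normalized free energy of the window in the environment `Λ`
and `f_W(β_W)` the free energy of the isolated window,
`0 ≤ f_{Λ,W}(β_W) − f_W(β_W) ≤ (β²/2)·|∂W|/|W|`. -/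
theorem window_free_energy_comparison (d : ℕ) (Λ W : Finset (Site d)) (hWΛ : W ⊆ Λ)
    (βW β : ℝ) (hβW : 0 ≤ βW) (hβ : 0 ≤ β) :
    0 ≤
      (((W.card : ℝ))⁻¹ * ∫ J, Real.log
          ((∑ σ : ↥Λ → Bool, Real.exp
              (βW * energy (edgesIn W) (extendE (edgesIn Λ) J) (extendConfig Λ σ)
                + β * energy (edgesIn (Λ \ W)) (extendE (edgesIn Λ) J) (extendConfig Λ σ)
                + β * energy (bdryEdges Λ W) (extendE (edgesIn Λ) J) (extendConfig Λ σ)))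
            / ∑ τ : ↥(Λ \ W) → Bool, Real.exp
              (β * energy (edgesIn (Λ \ W)) (extendE (edgesIn Λ) J)
                (extendConfig (Λ \ W) τ)))
          ∂(gaussPi ↥(edgesIn Λ)))
      - ((W.card : ℝ))⁻¹ * ∫ J, Real.log
          (∑ σ : ↥W → Bool, Real.exp
            (βW * energy (edgesIn W) (extendE (edgesIn Λ) J) (extendConfig W σ)))
          ∂(gaussPi ↥(edgesIn Λ)) ∧
    (((W.card : ℝ))⁻¹ * ∫ J, Real.log
          ((∑ σ : ↥Λ → Bool, Real.exp
              (βW * energy (edgesIn W) (extendE (edgesIn Λ) J) (extendConfig Λ σ)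
                + β * energy (edgesIn (Λ \ W)) (extendE (edgesIn Λ) J) (extendConfig Λ σ)
                + β * energy (bdryEdges Λ W) (extendE (edgesIn Λ) J) (extendConfig Λ σ)))
            / ∑ τ : ↥(Λ \ W) → Bool, Real.exp
              (β * energy (edgesIn (Λ \ W)) (extendE (edgesIn Λ) J)
                (extendConfig (Λ \ W) τ)))
          ∂(gaussPi ↥(edgesIn Λ)))
      - ((W.card : ℝ))⁻¹ * ∫ J, Real.log
          (∑ σ : ↥W → Bool, Real.exp
            (βW * energy (edgesIn W) (extendE (edgesIn Λ) J) (extendConfig W σ)))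
          ∂(gaussPi ↥(edgesIn Λ))
      ≤ β ^ 2 / 2 * ((bdryEdges Λ W).card / (W.card : ℝ)) :=
  window_free_energy_comparison_general d Λ W hWΛ βW β
end
end
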